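/- arXiv:2308.10101 — 2 statements merged into one kernel-verified Lean document; each statement's English description precedes it below -/
import Mathlib

section
/- Define φ_j = b_j − (2 + ∑_{i=1}^j b_i/a_i)/(∑_{i=1}^j 1/a_i) with a_i > 0 and b sorted ascending. If b_ρ + μ < 0 ≤ b_i + μ for i > ρ with μ = −(2+∑_{i=1}^ρ b_i/a_i)/(∑_{i=1}^ρ 1/a_i), then φ_j ≥ 0 for all j > ρ. -/
/-! Multiplying `φ_j` by `s_{1:j} = ∑_{i ≤ j} 1/a_i > 0` and splitting every sum at `ρ`, the
defining relation `μ s_{1:ρ} = -(2 + ∑_{i ≤ ρ} b_i/a_i)` turns `s_{1:j} φ_j` into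
`s_{1:ρ} (b_j + μ) + ∑_{ρ < i ≤ j} (b_j - b_i)/a_i`, a sum of nonnegative terms since
`b_j + μ ≥ 0` and `b` is sorted. -/

open Finset

theorem Finset.Icc_union_Ioc_eq_Icc {α : Type*} [LinearOrder α] [LocallyFiniteOrder α]
    {a b c : α} (h₁ : a ≤ b) (h₂ : b ≤ c) : Icc a b ∪ Ioc b c = Icc a c := by
  rw [← coe_inj, coe_union, coe_Icc, coe_Ioc, coe_Icc, Set.Icc_union_Ioc_eq_Icc h₁ h₂]

section WeightedSums

variable {ι : Type*} (a b : ι → ℝ)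

theorem sum_one_div_pos {s : Finset ι} (hs : s.Nonempty) (ha : ∀ i ∈ s, 0 < a i) :
    0 < ∑ i ∈ s, 1 / a i :=
  sum_pos (fun i hi => one_div_pos.mpr (ha i hi)) hs

variable [DecidableEq ι]

theorem mul_sum_one_div_union_sub_eq {s t : Finset ι} (hst : Disjoint s t) {c μ : ℝ}
    (hμ : μ * ∑ i ∈ s, 1 / a i = -(c + ∑ i ∈ s, b i / a i)) (x : ℝ) :
    x * ∑ i ∈ s ∪ t, 1 / a i - (c + ∑ i ∈ s ∪ t, b i / a i)
      = (x + μ) * ∑ i ∈ s, 1 / a i + ∑ i ∈ t, (x - b i) / a i := by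
  have hsplit : ∑ i ∈ t, (x - b i) / a i = x * ∑ i ∈ t, 1 / a i - ∑ i ∈ t, b i / a i := by
    rw [mul_sum, ← sum_sub_distrib]
    exact sum_congr rfl fun i _ => by ring
  rw [sum_union hst, sum_union hst, hsplit]
  linear_combination -hμ

theorem mul_sum_one_div_union_sub_nonneg {s t : Finset ι} (hst : Disjoint s t) {c μ x : ℝ}
    (hμ : μ * ∑ i ∈ s, 1 / a i = -(c + ∑ i ∈ s, b i / a i)) (hx : 0 ≤ x + μ)
    (ha : ∀ i ∈ s ∪ t, 0 ≤ a i) (hb : ∀ i ∈ t, b i ≤ x) :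
    0 ≤ x * ∑ i ∈ s ∪ t, 1 / a i - (c + ∑ i ∈ s ∪ t, b i / a i) := by
  rw [mul_sum_one_div_union_sub_eq a b hst hμ]
  refine add_nonneg (mul_nonneg hx (sum_nonneg fun i hi => ?_)) (sum_nonneg fun i hi => ?_)
  · exact one_div_nonneg.mpr (ha i (mem_union_left t hi))
  · exact div_nonneg (sub_nonneg.mpr (hb i hi)) (ha i (mem_union_right s hi))

end WeightedSums

theorem phi_nonneg_above_rho_general
    (P ρ : ℕ) (a b : ℕ → ℝ) (μ : ℝ)
    (hρ1 : 1 ≤ ρ)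
    (ha : ∀ i ∈ Finset.Icc 1 P, 0 < a i)
    (hsort : ∀ i ∈ Finset.Icc 1 P, ∀ j ∈ Finset.Icc 1 P, i ≤ j → b i ≤ b j)
    (hnonneg : ∀ i, ρ < i → i ≤ P → 0 ≤ b i + μ)
    (hμ : μ = -(2 + ∑ i ∈ Finset.Icc 1 ρ, b i / a i) / (∑ i ∈ Finset.Icc 1 ρ, 1 / a i)) :
    ∀ j, ρ < j → j ≤ P →
      0 ≤ b j - (2 + ∑ i ∈ Finset.Icc 1 j, b i / a i) / (∑ i ∈ Finset.Icc 1 j, 1 / a i) := by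
  intro j hρj hjP
  have hIcc : Icc 1 ρ ∪ Ioc ρ j = Icc 1 j := Icc_union_Ioc_eq_Icc hρ1 hρj.le
  have hjP' : Icc 1 j ⊆ Icc 1 P := Icc_subset_Icc_right hjP
  have haj : ∀ i ∈ Icc 1 j, 0 < a i := fun i hi => ha i (hjP' hi)
  have hsρ : 0 < ∑ i ∈ Icc 1 ρ, 1 / a i :=
    sum_one_div_pos a (nonempty_Icc.mpr hρ1) fun i hi => haj i (hIcc ▸ mem_union_left _ hi)
  have hsj : 0 < ∑ i ∈ Icc 1 j, 1 / a i :=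
    sum_one_div_pos a (nonempty_Icc.mpr (hρ1.trans hρj.le)) haj
  have hμ' : μ * ∑ i ∈ Icc 1 ρ, 1 / a i = -(2 + ∑ i ∈ Icc 1 ρ, b i / a i) := by
    rw [hμ]; field_simp
  have hdisj : Disjoint (Icc 1 ρ) (Ioc ρ j) :=
    (Iic_disjoint_Ioc le_rfl).mono_left Icc_subset_Iic_self
  rw [sub_nonneg, div_le_iff₀ hsj, ← sub_nonneg, ← hIcc]
  have hj : j ∈ Icc 1 P := hjP' (right_mem_Icc.mpr (hρ1.trans hρj.le))
  exact mul_sum_one_div_union_sub_nonneg a b hdisj hμ' (hnonneg j hρj hjP)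
    (fun i hi => (haj i (hIcc ▸ hi)).le)
    fun i hi => hsort i (hjP' (hIcc ▸ mem_union_right _ hi)) j hj (mem_Ioc.mp hi).2

/-- the `j > ρ` part of the proof of Theorem S.1: under the KKT sign
conditions and the formula (S.8) for `μ`, the quantity
`φ j = b j - (2 + ∑_{i=1}^j b i / a i) / (∑_{i=1}^j 1 / a i)` is nonnegative for all
`ρ < j ≤ P`. -/
theorem phi_nonneg_above_rho
    (P ρ : ℕ) (a b : ℕ → ℝ) (μ : ℝ)
    (hρ1 : 1 ≤ ρ) (hρP : ρ ≤ P)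
    (ha : ∀ i ∈ Finset.Icc 1 P, 0 < a i)
    (hsort : ∀ i ∈ Finset.Icc 1 P, ∀ j ∈ Finset.Icc 1 P, i ≤ j → b i ≤ b j)
    (hneg : b ρ + μ < 0)
    (hnonneg : ∀ i, ρ < i → i ≤ P → 0 ≤ b i + μ)
    (hμ : μ = -(2 + ∑ i ∈ Finset.Icc 1 ρ, b i / a i) / (∑ i ∈ Finset.Icc 1 ρ, 1 / a i)) :
    ∀ j, ρ < j → j ≤ P →
      0 ≤ b j - (2 + ∑ i ∈ Finset.Icc 1 j, b i / a i) / (∑ i ∈ Finset.Icc 1 j, 1 / a i) :=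
  phi_nonneg_above_rho_general P ρ a b μ hρ1 ha hsort hnonneg hμ
end

section
/- The output θ of Algorithm 1, namely θ_p = max{−(b_p + μ)/(2a_p), 0} with μ = −(2 + ∑_{i=1}^ρ u_i/v_i)/(∑_{i=1}^ρ 1/v_i) and ρ as in Theorem S.1 (u, v the sorted versions of b, a), satisfies the KKT conditions of the problem min_{θ ∈ Δ^{P-1}} θᵀ diag(a)θ + bᵀθ and is therefore the unique global minimizer. -/
/-!
With `λ_p = 2 a_p θ_p + b_p + μ`, the objective `f` satisfies, at every feasible `t`,
`f t = f θ + ∑ a_p (t_p - θ_p)² + ∑ λ_p t_p` as soon as `λ_p θ_p = 0` and `∑ t = ∑ θ`.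
For the clipped point `θ_p = max (-(b_p + μ) / (2 a_p)) 0` this complementary slackness holds,
and `λ_p ≥ 0`, for every `μ`; hence `θ` is the unique minimizer once it lies on the simplex.
The choice of `ρ` makes exactly the `ρ` smallest sorted coefficients `u_i` lie below the water
level `-μ`, and `μ` is then exactly what makes the clipped coordinates sum to `1`.
-/

open Finset

theorem Finset.sum_comp_eq_of_mapsTo {α M : Type*} [AddCommMonoid M] {s : Finset α}
    {e : α → α} (he : e.Injective) (hs : ∀ i ∈ s, e i ∈ s) (f : α → M) :
    ∑ i ∈ s, f (e i) = ∑ i ∈ s, f i :=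
  sum_nbij e hs he.injOn (surjOn_of_injOn_of_card_le e hs he.injOn le_rfl) fun _ _ => rfl

section SimplexQuadratic

variable {ι : Type*} (s : Finset ι) (a b : ι → ℝ)

def simplexOn : Set (ι → ℝ) :=
  {t | (∀ i, 0 ≤ t i) ∧ (∀ i, i ∉ s → t i = 0) ∧ ∑ i ∈ s, t i = 1}

def diagQuadratic (t : ι → ℝ) : ℝ :=
  ∑ i ∈ s, (a i * t i ^ 2 + b i * t i)

variable {s a b} {θ : ι → ℝ} {μ : ℝ}

theorem diagQuadratic_eq_add_of_slack {t : ι → ℝ} (hsum : ∑ i ∈ s, t i = ∑ i ∈ s, θ i)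
    (hslack : ∀ i ∈ s, (2 * a i * θ i + b i + μ) * θ i = 0) :
    diagQuadratic s a b t = diagQuadratic s a b θ + ∑ i ∈ s, a i * (t i - θ i) ^ 2
      + ∑ i ∈ s, (2 * a i * θ i + b i + μ) * t i := by
  have key : ∀ i ∈ s, a i * t i ^ 2 + b i * t i = (a i * θ i ^ 2 + b i * θ i)
      + a i * (t i - θ i) ^ 2 + (2 * a i * θ i + b i + μ) * t i - μ * (t i - θ i) :=
    fun i hi => by linear_combination -hslack i hi
  simp only [diagQuadratic, sum_congr rfl key, sum_sub_distrib, sum_add_distrib, ← mul_sum,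
    hsum]
  ring

theorem isMinOn_diagQuadratic_of_kkt (ha : ∀ i ∈ s, 0 ≤ a i) (hθ : θ ∈ simplexOn s)
    (hdual : ∀ i ∈ s, 0 ≤ 2 * a i * θ i + b i + μ)
    (hslack : ∀ i ∈ s, (2 * a i * θ i + b i + μ) * θ i = 0) :
    IsMinOn (diagQuadratic s a b) (simplexOn s) θ := by
  refine isMinOn_iff.mpr fun t ⟨ht0, _, ht1⟩ => ?_
  rw [diagQuadratic_eq_add_of_slack (ht1.trans hθ.2.2.symm) hslack]
  have := sum_nonneg fun i hi => mul_nonneg (ha i hi) (sq_nonneg (t i - θ i))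
  have := sum_nonneg fun i hi => mul_nonneg (hdual i hi) (ht0 i)
  linarith

theorem eq_of_diagQuadratic_le_of_kkt (ha : ∀ i ∈ s, 0 < a i) (hθ : θ ∈ simplexOn s)
    (hdual : ∀ i ∈ s, 0 ≤ 2 * a i * θ i + b i + μ)
    (hslack : ∀ i ∈ s, (2 * a i * θ i + b i + μ) * θ i = 0)
    {θ' : ι → ℝ} (hθ' : θ' ∈ simplexOn s) (hle : diagQuadratic s a b θ' ≤ diagQuadratic s a b θ) :
    θ' = θ := by
  obtain ⟨h0', hout', h1'⟩ := hθ'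
  rw [diagQuadratic_eq_add_of_slack (h1'.trans hθ.2.2.symm) hslack] at hle
  have hsq : ∀ i ∈ s, 0 ≤ a i * (θ' i - θ i) ^ 2 := fun i hi =>
    mul_nonneg (ha i hi).le (sq_nonneg _)
  have := sum_nonneg fun i hi => mul_nonneg (hdual i hi) (h0' i)
  have hzero : ∑ i ∈ s, a i * (θ' i - θ i) ^ 2 = 0 :=
    le_antisymm (by linarith) (sum_nonneg hsq)
  funext i
  by_cases hi : i ∈ s
  · have := (sum_eq_zero_iff_of_nonneg hsq).mp hzero i hi
    have := (mul_eq_zero.mp this).resolve_left (ha i hi).ne'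
    linarith [pow_eq_zero_iff (n := 2) two_ne_zero |>.mp this]
  · rw [hout' i hi, hθ.2.1 i hi]

end SimplexQuadratic

section ClippedStationaryPoint

variable {a c : ℝ}

theorem two_mul_max_neg_div_zero (ha : 0 < a) :
    2 * a * max (-c / (2 * a)) 0 = max (-c) 0 := by
  rw [mul_max_of_nonneg _ _ (by positivity), mul_zero, mul_div_cancel₀ _ (by positivity)]

theorem two_mul_max_neg_div_zero_add_nonneg (ha : 0 < a) :
    0 ≤ 2 * a * max (-c / (2 * a)) 0 + c := by
  rw [two_mul_max_neg_div_zero ha]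
  linarith [le_max_left (-c) 0]

theorem two_mul_max_neg_div_zero_add_mul_self (ha : 0 < a) :
    (2 * a * max (-c / (2 * a)) 0 + c) * max (-c / (2 * a)) 0 = 0 := by
  rcases le_total c 0 with hc | hc
  · rw [two_mul_max_neg_div_zero ha, max_eq_left (by linarith), neg_add_cancel, zero_mul]
  · rw [max_eq_right (div_nonpos_of_nonpos_of_nonneg (by linarith) (by positivity)), mul_zero]

end ClippedStationaryPoint
section WaterLevel

variable (u v : ℕ → ℝ)

noncomputable def waterLevel (j : ℕ) : ℝ :=
  (2 + ∑ i ∈ Icc 1 j, u i / v i) / ∑ i ∈ Icc 1 j, 1 / v i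

variable {u v} {P : ℕ}

theorem sum_Icc_one_div_pos (hv : ∀ i ∈ Icc 1 P, 0 < v i) {j : ℕ} (hj : 1 ≤ j) (hjP : j ≤ P) :
    0 < ∑ i ∈ Icc 1 j, 1 / v i :=
  sum_pos (fun i hi => one_div_pos.mpr (hv i (Icc_subset_Icc_right hjP hi))) ⟨1, by simp [hj]⟩

theorem lt_waterLevel_one (hv : 0 < v 1) : u 1 < waterLevel u v 1 := by
  have : waterLevel u v 1 = 2 * v 1 + u 1 := by
    simp only [waterLevel, Icc_self, sum_singleton]
    field_simp
  linarith

theorem waterLevel_le_of_waterLevel_succ_le {j : ℕ} (hB : 0 < ∑ i ∈ Icc 1 j, 1 / v i)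
    (hv : 0 < v (j + 1)) (h : waterLevel u v (j + 1) ≤ u (j + 1)) :
    waterLevel u v j ≤ u (j + 1) := by
  simp only [waterLevel, sum_Icc_succ_top (Nat.le_add_left 1 j)] at h ⊢
  rw [div_le_iff₀ (by positivity)] at h
  rw [div_le_iff₀ hB]
  have : u (j + 1) / v (j + 1) = u (j + 1) * (1 / v (j + 1)) := (mul_one_div _ _).symm
  linarith

theorem waterLevel_sSup_spec (hP : 1 ≤ P) (hv : ∀ i ∈ Icc 1 P, 0 < v i)
    (hmono : ∀ i ∈ Icc 1 P, ∀ j ∈ Icc 1 P, i ≤ j → u i ≤ u j) {ρ : ℕ}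
    (hρ : ρ = sSup {j : ℕ | 1 ≤ j ∧ j ≤ P ∧ u j - waterLevel u v j < 0}) :
    1 ≤ ρ ∧ ρ ≤ P ∧ (∀ i ∈ Icc 1 ρ, u i < waterLevel u v ρ) ∧
      ∀ i ∈ Icc 1 P, ρ < i → waterLevel u v ρ ≤ u i := by
  set S := {j : ℕ | 1 ≤ j ∧ j ≤ P ∧ u j - waterLevel u v j < 0}
  have hbdd : BddAbove S := ⟨P, fun j hj => hj.2.1⟩
  have h1 : 1 ∈ S := ⟨le_rfl, hP, sub_neg.mpr (lt_waterLevel_one (hv 1 (by simp [hP])))⟩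
  obtain ⟨hρ1, hρP, hρlt⟩ : ρ ∈ S := hρ ▸ Nat.sSup_mem ⟨1, h1⟩ hbdd
  have hmemρ : ρ ∈ Icc 1 P := mem_Icc.mpr ⟨hρ1, hρP⟩
  refine ⟨hρ1, hρP, fun i hi => ?_, fun i hi hρi => ?_⟩
  · obtain ⟨hi1, hiρ⟩ := mem_Icc.mp hi
    linarith [hmono i (mem_Icc.mpr ⟨hi1, hiρ.trans hρP⟩) ρ hmemρ hiρ]
  · have hnext : ρ + 1 ∈ Icc 1 P := mem_Icc.mpr ⟨by omega, by linarith [(mem_Icc.mp hi).2]⟩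
    have hnotS : ρ + 1 ∉ S := fun h => by linarith [hρ ▸ le_csSup hbdd h]
    have hle : waterLevel u v (ρ + 1) ≤ u (ρ + 1) := by
      by_contra hlt
      exact hnotS ⟨by omega, (mem_Icc.mp hnext).2, by linarith⟩
    have := waterLevel_le_of_waterLevel_succ_le (sum_Icc_one_div_pos hv hρ1 hρP) (hv _ hnext) hle
    linarith [hmono (ρ + 1) hnext i hi hρi]

theorem sum_max_waterLevel_sub_div_eq_one {ρ : ℕ} (hv : ∀ i ∈ Icc 1 P, 0 < v i)
    (hρ1 : 1 ≤ ρ) (hρP : ρ ≤ P) (hbelow : ∀ i ∈ Icc 1 ρ, u i < waterLevel u v ρ)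
    (habove : ∀ i ∈ Icc 1 P, ρ < i → waterLevel u v ρ ≤ u i) :
    ∑ i ∈ Icc 1 P, max ((waterLevel u v ρ - u i) / (2 * v i)) 0 = 1 := by
  have hsub : Icc 1 ρ ⊆ Icc 1 P := Icc_subset_Icc_right hρP
  have hB := sum_Icc_one_div_pos hv hρ1 hρP
  rw [← sum_subset hsub fun i hi hiρ => max_eq_right <| div_nonpos_of_nonpos_of_nonneg
      (by linarith [habove i hi (by simp_all)]) (by linarith [hv i hi])]
  calc ∑ i ∈ Icc 1 ρ, max ((waterLevel u v ρ - u i) / (2 * v i)) 0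
      = ∑ i ∈ Icc 1 ρ, (waterLevel u v ρ / 2 * (1 / v i) - 1 / 2 * (u i / v i)) := by
        refine sum_congr rfl fun i hi => ?_
        have := hv i (hsub hi)
        rw [max_eq_left (div_nonneg (by linarith [hbelow i hi]) (by positivity))]
        field_simp
    _ = 1 := by
        rw [sum_sub_distrib, ← mul_sum, ← mul_sum, waterLevel]
        field_simp
        ring

end WaterLevel

/-- correctness of Algorithm 1: its output
`θ p = max (-(b p + μ)/(2 a p)) 0`, with `μ` computed from the sorted versions
`u = b ∘ σ`, `v = a ∘ σ` and `ρ` as in Theorem S.1, is the unique global minimizer of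
`θᵀ diag(a) θ + bᵀ θ` over the simplex. -/
theorem algorithm_one_correct
    (P ρ : ℕ) (a b : ℕ → ℝ) (σ : Equiv.Perm ℕ) (u v θ : ℕ → ℝ) (μ : ℝ)
    (hP : 1 ≤ P)
    (ha : ∀ i ∈ Finset.Icc 1 P, 0 < a i)
    (hσ : ∀ i ∈ Finset.Icc 1 P, σ i ∈ Finset.Icc 1 P)
    (hu : ∀ i, u i = b (σ i)) (hv : ∀ i, v i = a (σ i))
    (husort : ∀ i ∈ Finset.Icc 1 P, ∀ j ∈ Finset.Icc 1 P, i ≤ j → u i ≤ u j)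
    (hρ : ρ = sSup {j : ℕ | 1 ≤ j ∧ j ≤ P ∧
      u j - (2 + ∑ i ∈ Finset.Icc 1 j, u i / v i) / (∑ i ∈ Finset.Icc 1 j, 1 / v i)
        < 0})
    (hμ : μ = -(2 + ∑ i ∈ Finset.Icc 1 ρ, u i / v i) / (∑ i ∈ Finset.Icc 1 ρ, 1 / v i))
    (hθ : ∀ p, θ p = if p ∈ Finset.Icc 1 P then max (-(b p + μ) / (2 * a p)) 0 else 0) :
    θ ∈ {t : ℕ → ℝ | (∀ i, 0 ≤ t i) ∧ (∀ i, i ∉ Finset.Icc 1 P → t i = 0) ∧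
        ∑ i ∈ Finset.Icc 1 P, t i = 1} ∧
      IsMinOn (fun t : ℕ → ℝ => ∑ i ∈ Finset.Icc 1 P, (a i * t i ^ 2 + b i * t i))
        {t : ℕ → ℝ | (∀ i, 0 ≤ t i) ∧ (∀ i, i ∉ Finset.Icc 1 P → t i = 0) ∧
          ∑ i ∈ Finset.Icc 1 P, t i = 1} θ ∧
      ∀ θ' : ℕ → ℝ,
        θ' ∈ {t : ℕ → ℝ | (∀ i, 0 ≤ t i) ∧ (∀ i, i ∉ Finset.Icc 1 P → t i = 0) ∧
          ∑ i ∈ Finset.Icc 1 P, t i = 1} →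
        IsMinOn (fun t : ℕ → ℝ => ∑ i ∈ Finset.Icc 1 P, (a i * t i ^ 2 + b i * t i))
          {t : ℕ → ℝ | (∀ i, 0 ≤ t i) ∧ (∀ i, i ∉ Finset.Icc 1 P → t i = 0) ∧
            ∑ i ∈ Finset.Icc 1 P, t i = 1} θ' →
        θ' = θ := by
  have hv_pos : ∀ i ∈ Icc 1 P, 0 < v i := fun i hi => hv i ▸ ha _ (hσ i hi)
  obtain ⟨hρ1, hρP, hbelow, habove⟩ := waterLevel_sSup_spec hP hv_pos husort hρ
  have hθ_in : ∀ p ∈ Icc 1 P, θ p = max (-(b p + μ) / (2 * a p)) 0 := fun p hp => by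
    rw [hθ, if_pos hp]
  have hμ_level : μ = -waterLevel u v ρ := by rw [hμ, waterLevel, neg_div]
  have hsum : ∑ p ∈ Icc 1 P, θ p = 1 := by
    rw [← sum_comp_eq_of_mapsTo σ.injective hσ,
      ← sum_max_waterLevel_sub_div_eq_one hv_pos hρ1 hρP hbelow habove]
    refine sum_congr rfl fun i hi => ?_
    rw [hθ_in _ (hσ i hi), ← hu, ← hv, hμ_level, neg_add, neg_neg, neg_add_eq_sub]
  have hfeas : θ ∈ simplexOn (Icc 1 P) := by
    refine ⟨fun p => ?_, fun p hp => by rw [hθ, if_neg hp], hsum⟩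
    rw [hθ]
    split_ifs
    exacts [le_max_right _ _, le_rfl]
  have hdual : ∀ p ∈ Icc 1 P, 0 ≤ 2 * a p * θ p + b p + μ := fun p hp => by
    rw [hθ_in p hp, add_assoc]
    exact two_mul_max_neg_div_zero_add_nonneg (ha p hp)
  have hslack : ∀ p ∈ Icc 1 P, (2 * a p * θ p + b p + μ) * θ p = 0 := fun p hp => by
    rw [hθ_in p hp, add_assoc]
    exact two_mul_max_neg_div_zero_add_mul_self (ha p hp)
  have hmin := isMinOn_diagQuadratic_of_kkt (fun p hp => (ha p hp).le) hfeas hdual hslack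
  exact ⟨hfeas, hmin, fun θ' hθ' hmin' => eq_of_diagQuadratic_le_of_kkt ha hfeas hdual hslack hθ'
    (isMinOn_iff.mp hmin' θ hfeas)⟩
end
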